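/- Let γ : [0,∞) → ℝ^d be a C^1 curve parametrized by Euclidean arc length with γ(0)=0, and suppose there exist D ≥ 1 and L ≥ 0 such that for all l ≥ L, r(l) ≤ l ≤ D·r(l), where r(l) = |γ(l)|. Set β = 1/(2D) and δ = 1/(2D−1), and let F = {l : ṙ(l) > β and r(l) = sup_{l'≤l} r(l')}. Then for all l ≥ L, Leb(F ∩ [0,l]) ≥ δ·l. -/

import Mathlib

/-!
Let `m t = sup_{[0,t]} r` be the running maximum of `r = ‖γ‖`. Like `r`, it is 1-Lipschitz
on `[0, ∞)`, hence absolutely continuous, so `m l = ∫₀ˡ m'`. Where `r < m`, `m` is locally constant;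
where `r = m`, `m - r` has a local minimum, so `m' = r'` wherever both are differentiable. Thus
`m' ≤ 1` on `F` and `m' ≤ β` almost everywhere off `F`, whence
`l / D ≤ r l ≤ m l ≤ |F ∩ [0,l]| + β (l - |F ∩ [0,l]|)`, which rearranges to the claim.
-/

open Set MeasureTheory Filter Topology

noncomputable def runningSup (f : ℝ → ℝ) (t : ℝ) : ℝ := sSup (f '' Icc 0 t)

def frontierTimes (f : ℝ → ℝ) (β : ℝ) : Set ℝ :=
  {t | 0 ≤ t ∧ β < deriv f t ∧ f t = runningSup f t}

section runningSup

variable {f : ℝ → ℝ} {K : NNReal} {s t c β l : ℝ}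

lemma le_runningSup (hf : ContinuousOn f (Ici 0)) (hs : s ∈ Icc 0 t) : f s ≤ runningSup f t :=
  le_csSup (isCompact_Icc.bddAbove_image (hf.mono Icc_subset_Ici_self))
    (mem_image_of_mem f hs)

lemma runningSup_le (ht : 0 ≤ t) (h : ∀ s ∈ Icc 0 t, f s ≤ c) : runningSup f t ≤ c :=
  csSup_le ((nonempty_Icc.2 ht).image f) (forall_mem_image.2 h)

lemma exists_eq_runningSup (hf : ContinuousOn f (Ici 0)) (ht : 0 ≤ t) :
    ∃ s ∈ Icc 0 t, f s = runningSup f t :=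
  (isCompact_Icc.image_of_continuousOn (hf.mono Icc_subset_Ici_self)).sSup_mem
    ((nonempty_Icc.2 ht).image f)

lemma runningSup_zero : runningSup f 0 = f 0 := by
  simp [runningSup]

lemma monotoneOn_runningSup (hf : ContinuousOn f (Ici 0)) : MonotoneOn (runningSup f) (Ici 0) :=
  fun _ hs _ _ hst => runningSup_le hs fun _ hu => le_runningSup hf ⟨hu.1, hu.2.trans hst⟩

lemma lipschitzOnWith_runningSup (hf : LipschitzOnWith K f (Ici 0)) :
    LipschitzOnWith K (runningSup f) (Ici 0) := by
  refine LipschitzOnWith.of_le_add_mul K fun x hx y hy => ?_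
  rcases le_total x y with hxy | hyx
  · exact (monotoneOn_runningSup hf.continuousOn hx hy hxy).trans
      (le_add_of_nonneg_right (by positivity))
  refine runningSup_le hx fun s hs => ?_
  rcases le_total s y with hsy | hys
  · exact (le_runningSup hf.continuousOn ⟨hs.1, hsy⟩).trans
      (le_add_of_nonneg_right (by positivity))
  calc f s ≤ f y + K * dist s y := hf.le_add_mul (hy.trans hys) hy
    _ ≤ runningSup f y + K * dist x y := by
      gcongr
      · exact le_runningSup hf.continuousOn ⟨hy, le_rfl⟩
      · rw [Real.dist_eq, Real.dist_eq, abs_of_nonneg (sub_nonneg.2 hys),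
          abs_of_nonneg (sub_nonneg.2 hyx)]
        linarith [hs.2]

lemma runningSup_eventuallyEq_of_lt (hf : ContinuousOn f (Ici 0)) (ht : 0 < t)
    (hlt : f t < runningSup f t) : runningSup f =ᶠ[𝓝 t] fun _ => runningSup f t := by
  have hft : ContinuousAt f t := hf.continuousAt (Ici_mem_nhds ht)
  obtain ⟨ε, hε, hball⟩ := Metric.eventually_nhds_iff_ball.1
    ((hft.eventually (gt_mem_nhds hlt)).and (Ioi_mem_nhds ht))
  obtain ⟨u, hu, hfu⟩ := exists_eq_runningSup hf ht.le
  have hu_far : u ≤ t - ε := by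
    by_contra! h
    refine (hball u ?_).1.ne hfu
    rw [Metric.mem_ball, Real.dist_eq, abs_of_nonpos (by linarith [hu.2])]
    linarith
  filter_upwards [Metric.ball_mem_nhds t hε] with s hs
  have hs0 : 0 < s := (hball s hs).2
  rw [Metric.mem_ball, Real.dist_eq, abs_lt] at hs
  refine le_antisymm (runningSup_le hs0.le fun v hv => ?_) ?_
  · rcases le_total v t with hvt | htv
    · exact le_runningSup hf ⟨hv.1, hvt⟩
    · refine (hball v ?_).1.le
      rw [Metric.mem_ball, Real.dist_eq, abs_lt]
      constructor <;> linarith [hv.2]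
  · exact hfu ▸ le_runningSup hf ⟨hu.1, by linarith⟩

lemma deriv_runningSup_of_eq (hf : ContinuousOn f (Ici 0)) (ht : 0 < t)
    (heq : f t = runningSup f t) (hfd : DifferentiableAt ℝ f t)
    (hmd : DifferentiableAt ℝ (runningSup f) t) : deriv (runningSup f) t = deriv f t := by
  have hmin : IsLocalMin (runningSup f - f) t := by
    filter_upwards [Ici_mem_nhds ht] with s hs
    simpa [heq] using le_runningSup hf ⟨hs, le_rfl⟩
  have h := hmin.deriv_eq_zero
  rw [deriv_sub hmd hfd] at h
  linarith

lemma deriv_runningSup_le_of_notMem_frontierTimes (hf : ContinuousOn f (Ici 0))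
    (hβ : 0 ≤ β) (ht : 0 < t) (hfd : DifferentiableAt ℝ f t)
    (hmd : DifferentiableAt ℝ (runningSup f) t) (hF : t ∉ frontierTimes f β) :
    deriv (runningSup f) t ≤ β := by
  rcases (le_runningSup hf ⟨ht.le, le_rfl⟩).eq_or_lt with heq | hlt
  · rw [deriv_runningSup_of_eq hf ht heq hfd hmd]
    by_contra! h
    exact hF ⟨ht.le, h, heq⟩
  · rw [(runningSup_eventuallyEq_of_lt hf ht hlt).deriv_eq, deriv_const]
    exact hβ

lemma isClosed_setOf_eq_runningSup (hf : LipschitzOnWith K f (Ici 0)) :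
    IsClosed {t | 0 ≤ t ∧ f t = runningSup f t} := by
  have h : {t | 0 ≤ t ∧ f t = runningSup f t} = Ici 0 ∩ (f - runningSup f) ⁻¹' {0} := by
    ext; simp [sub_eq_zero]
  rw [h]
  exact ContinuousOn.preimage_isClosed_of_isClosed
    (hf.continuousOn.sub (lipschitzOnWith_runningSup hf).continuousOn)
    isClosed_Ici isClosed_singleton

lemma measurableSet_frontierTimes (hf : LipschitzOnWith K f (Ici 0)) (β : ℝ) :
    MeasurableSet (frontierTimes f β) := by
  have h : frontierTimes f β =
      {t | β < deriv f t} ∩ {t | 0 ≤ t ∧ f t = runningSup f t} := by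
    ext; simp only [frontierTimes, mem_ofPred_eq, mem_inter_iff]; tauto
  rw [h]
  exact (measurableSet_lt measurable_const (measurable_deriv f)).inter
    (isClosed_setOf_eq_runningSup hf).measurableSet

lemma ae_differentiableAt_of_lipschitzOnWith (hf : LipschitzOnWith K f (Ici 0)) (hl : 0 ≤ l) :
    ∀ᵐ t, t ∈ Icc 0 l → DifferentiableAt ℝ f t := by
  have hI : uIcc 0 l ⊆ Ici 0 := by rw [uIcc_of_le hl]; exact Icc_subset_Ici_self
  simpa only [uIcc_of_le hl] using (hf.mono hI).absolutelyContinuousOnInterval.ae_differentiableAt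

theorem runningSup_sub_le_of_lipschitzOnWith (hf : LipschitzOnWith K f (Ici 0)) (hβ : 0 ≤ β)
    (hl : 0 ≤ l) :
    runningSup f l - f 0 ≤ K * volume.real (frontierTimes f β ∩ Icc 0 l)
      + β * (l - volume.real (frontierTimes f β ∩ Icc 0 l)) := by
  set m := runningSup f
  set E := frontierTimes f β
  have hm : LipschitzOnWith K m (Ici 0) := lipschitzOnWith_runningSup hf
  have hE : MeasurableSet E := measurableSet_frontierTimes hf β
  have hI : uIcc 0 l ⊆ Ici 0 := by rw [uIcc_of_le hl]; exact Icc_subset_Ici_self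
  have hm_ac := (hm.mono hI).absolutelyContinuousOnInterval
  have hint : IntegrableOn (deriv m) (Icc 0 l) := by
    rw [integrableOn_Icc_iff_integrableOn_Ioc]
    exact (intervalIntegrable_iff_integrableOn_Ioc_of_le hl).1 hm_ac.intervalIntegrable_deriv
  have hconst (c : ℝ) : IntegrableOn (fun _ => c) (Icc 0 l) :=
    integrableOn_const measure_Icc_lt_top.ne
  have hae :
      ∀ᵐ t, t ∈ Icc 0 l → 0 < t ∧ DifferentiableAt ℝ f t ∧ DifferentiableAt ℝ m t := by
    filter_upwards [ae_differentiableAt_of_lipschitzOnWith hf hl,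
      ae_differentiableAt_of_lipschitzOnWith hm hl,
      compl_mem_ae_iff.2 (measure_singleton (0 : ℝ))] with t hfd hmd ht0 ht
    exact ⟨ht.1.lt_of_ne (Ne.symm ht0), hfd ht, hmd ht⟩
  have hvol : volume.real (Icc 0 l ∩ E) + volume.real (Icc 0 l \ E) = l := by
    rw [measureReal_inter_add_sdiff hE measure_Icc_lt_top.ne, Real.volume_real_Icc_of_le hl,
      sub_zero]
  calc m l - f 0 = ∫ t in Icc 0 l, deriv m t := by
        rw [← runningSup_zero (f := f), ← hm_ac.integral_deriv_eq_sub,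
          intervalIntegral.integral_of_le hl, integral_Icc_eq_integral_Ioc]
    _ = (∫ t in Icc 0 l ∩ E, deriv m t) + ∫ t in Icc 0 l \ E, deriv m t :=
        (integral_inter_add_sdiff hE hint).symm
    _ ≤ (∫ _ in Icc 0 l ∩ E, (K : ℝ)) + ∫ _ in Icc 0 l \ E, β := by
        refine add_le_add ?_ ?_
        · refine setIntegral_mono_on_ae (hint.mono_set inter_subset_left)
            ((hconst _).mono_set inter_subset_left) (measurableSet_Icc.inter hE) ?_
          filter_upwards [hae] with t ht htIE
          exact (le_abs_self _).trans
            (norm_deriv_le_of_lipschitzOn (Ici_mem_nhds (ht htIE.1).1) hm)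
        · refine setIntegral_mono_on_ae (hint.mono_set sdiff_subset)
            ((hconst _).mono_set sdiff_subset) (measurableSet_Icc.diff hE) ?_
          filter_upwards [hae] with t ht htIE
          obtain ⟨ht0, hfd, hmd⟩ := ht htIE.1
          exact deriv_runningSup_le_of_notMem_frontierTimes hf.continuousOn hβ ht0 hfd hmd htIE.2
    _ = K * volume.real (E ∩ Icc 0 l) + β * (l - volume.real (E ∩ Icc 0 l)) := by
        rw [setIntegral_const, setIntegral_const, smul_eq_mul, smul_eq_mul, inter_comm E]
        linear_combination β * hvol

end runningSup

theorem stmt_4_general (d : ℕ) (γ : ℝ → EuclideanSpace ℝ (Fin d))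
    (hγC1 : ContDiff ℝ 1 γ) (hγ0 : γ 0 = 0)
    (hunit : ∀ l : ℝ, 0 ≤ l → ‖deriv γ l‖ = 1)
    (r : ℝ → ℝ) (hr : r = fun l => ‖γ l‖)
    (D L : ℝ) (hD : 1 ≤ D)
    (hcomp : ∀ l : ℝ, L ≤ l → r l ≤ l ∧ l ≤ D * r l)
    (β δ : ℝ) (hβ : β = 1 / (2 * D)) (hδ : δ = 1 / (2 * D - 1))
    (F : Set ℝ)
    (hF : F = { l : ℝ | 0 ≤ l ∧ deriv r l > β ∧ r l = sSup (r '' Icc 0 l) }) :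
    ∀ l : ℝ, L ≤ l → δ * l ≤ (volume (F ∩ Icc 0 l)).toReal := by
  intro l hl
  subst hr hF hβ hδ
  have hγ : LipschitzOnWith 1 γ (Ici 0) :=
    Convex.lipschitzOnWith_of_nnnorm_deriv_le (fun x _ => hγC1.differentiable one_ne_zero x)
      (fun x hx => by simp [← NNReal.coe_le_coe, hunit x hx]) (convex_Ici 0)
  have hr : LipschitzOnWith 1 (fun l => ‖γ l‖) (Ici 0) := by
    simpa [Function.comp_def] using lipschitzWith_one_norm.comp_lipschitzOnWith hγ
  have hl0 : 0 ≤ l := (norm_nonneg _).trans (hcomp l hl).1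
  have key := runningSup_sub_le_of_lipschitzOnWith hr (β := 1 / (2 * D)) (by positivity) hl0
  set a := volume.real (frontierTimes (fun l => ‖γ l‖) (1 / (2 * D)) ∩ Icc 0 l)
  have hla : l ≤ D * a + (l - a) / 2 :=
    calc l ≤ D * ‖γ l‖ := (hcomp l hl).2
      _ ≤ D * runningSup (fun l => ‖γ l‖) l := by
        gcongr; exact le_runningSup hr.continuousOn ⟨hl0, le_rfl⟩
      _ ≤ D * (a + 1 / (2 * D) * (l - a)) := by
        gcongr; simpa [hγ0] using key
      _ = D * a + (l - a) / 2 := by field_simp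
  show 1 / (2 * D - 1) * l ≤ a
  rw [div_mul_eq_mul_div, one_mul, div_le_iff₀ (by linarith)]
  linarith

/-- Frontier density lemma: if `r(l) ≤ l ≤ D·r(l)` for `l ≥ L`, then the set
`F` of frontier times (with `β = 1/(2D)`) has Lebesgue density at least
`δ = 1/(2D−1)` in `[0,l]` for all `l ≥ L`. -/
theorem stmt_4 (d : ℕ) (γ : ℝ → EuclideanSpace ℝ (Fin d))
    (hγC1 : ContDiff ℝ 1 γ) (hγ0 : γ 0 = 0)
    (hunit : ∀ l : ℝ, 0 ≤ l → ‖deriv γ l‖ = 1)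
    (r : ℝ → ℝ) (hr : r = fun l => ‖γ l‖)
    (D L : ℝ) (hD : 1 ≤ D) (hL : 0 ≤ L)
    (hcomp : ∀ l : ℝ, L ≤ l → r l ≤ l ∧ l ≤ D * r l)
    (β δ : ℝ) (hβ : β = 1 / (2 * D)) (hδ : δ = 1 / (2 * D - 1))
    (F : Set ℝ)
    (hF : F = { l : ℝ | 0 ≤ l ∧ deriv r l > β ∧ r l = sSup (r '' Icc 0 l) }) :
    ∀ l : ℝ, L ≤ l → δ * l ≤ (volume (F ∩ Icc 0 l)).toReal :=
  stmt_4_general d γ hγC1 hγ0 hunit r hr D L hD hcomp β δ hβ hδ F hF
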